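/- arXiv:1209.5028 — 4 statements merged into one kernel-verified Lean document; each statement's English description precedes it below -/
import Mathlib

section
/- Let u: ℝ² → ℝ be smooth with u > 0 and uu_t − u_x² > 0 at a point (t,x). Then the group element with parameters ε₁ = −t, ε₂ = −(x + 2t u_x/u), ε₃ = −(ln u − x u_x/u − t u_x²/u²), ε₄ = ½ ln(u_t/u − u_x²/u²), ε₅ = u_x/u is the unique element of the 5-parameter group (acting as t̃ = e^{2ε₄}(t+ε₁), x̃ = e^{ε₄}(x+ε₂+2ε₅t), ũ = e^{ε₃-ε₅x-ε₅²t}u, prolonged to first derivatives) that maps the first-order jet (t, x, u, u_t, u_x) to the normalized jet (0, 0, 1, 1, 0). -/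
open Real

/-- The prolonged action of the 5-parameter group on first-order jets
`(t, x, u, u_t, u_x)`, with parameters `ε = (ε₁,ε₂,ε₃,ε₄,ε₅)`. -/
noncomputable def jetAct (ε : ℝ × ℝ × ℝ × ℝ × ℝ) (z : ℝ × ℝ × ℝ × ℝ × ℝ) : ℝ × ℝ × ℝ × ℝ × ℝ :=
  let e1 := ε.1; let e2 := ε.2.1; let e3 := ε.2.2.1; let e4 := ε.2.2.2.1
  let e5 := ε.2.2.2.2
  let t := z.1; let x := z.2.1; let u := z.2.2.1; let ut := z.2.2.2.1
  let ux := z.2.2.2.2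
  let μ := e3 - e5*x - e5^2*t
  (exp (2*e4) * (t + e1),
   exp e4 * (x + e2 + 2*e5*t),
   exp μ * u,
   exp (-2*e4 + μ) * (ut - 2*e5*ux + e5^2*u),
   exp (-e4 + μ) * (ux - e5*u))

/-!
Normalizing the last component, `e^{-ε₄+μ}(u_x − ε₅u) = 0`, forces `ε₅ = u_x/u`. With `ε₅` fixed
the remaining equations decouple: since `u_t − 2ε₅u_x + ε₅²u = u·(u_t/u − u_x²/u²)`, the `u_t`
component is `e^{-2ε₄}(u_t/u − u_x²/u²)` times the `u` component `e^{μ}u`, so each of `ε₁,…,ε₄` is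
determined by one equation, the logarithmic ones because `u > 0` and `u_t/u − u_x²/u² > 0`.
-/

theorem Real.exp_mul_eq_one_iff {a b : ℝ} (hb : 0 < b) : exp a * b = 1 ↔ a = -log b := by
  rw [mul_eq_one_iff_eq_inv₀ hb.ne', ← exp_log (inv_pos.2 hb), exp_eq_exp, log_inv]

theorem div_sub_sq_div_sq_pos {K : Type*} [Field K] [LinearOrder K] [IsStrictOrderedRing K]
    {u ut ux : K} (hu : 0 < u) (hd : 0 < u * ut - ux ^ 2) : 0 < ut / u - ux ^ 2 / u ^ 2 := by
  have : ut / u - ux ^ 2 / u ^ 2 = (u * ut - ux ^ 2) / u ^ 2 := by field_simp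
  rw [this]
  positivity

noncomputable def movingFrame (t x u ut ux : ℝ) : ℝ × ℝ × ℝ × ℝ × ℝ :=
  (-t, -(x + 2*t*ux/u), -(Real.log u - x*ux/u - t*ux^2/u^2),
    (1/2) * Real.log (ut/u - ux^2/u^2), ux/u)

section

variable {t x u ut ux : ℝ}

theorem jetAct_fifth_eq_zero_iff (ε : ℝ × ℝ × ℝ × ℝ × ℝ) (hu : u ≠ 0) :
    (jetAct ε (t, x, u, ut, ux)).2.2.2.2 = 0 ↔ ε.2.2.2.2 = ux / u := by
  rw [eq_div_iff hu, jetAct, mul_eq_zero_iff_left (exp_ne_zero _), sub_eq_zero, eq_comm]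

theorem jetAct_of_fifth_eq_div (e1 e2 e3 e4 : ℝ) (hu : u ≠ 0) :
    jetAct (e1, e2, e3, e4, ux / u) (t, x, u, ut, ux) =
      let μ := e3 - ux / u * x - (ux / u) ^ 2 * t
      (exp (2 * e4) * (t + e1), exp e4 * (x + e2 + 2 * (ux / u) * t), exp μ * u,
        exp (-2 * e4) * (ut / u - ux ^ 2 / u ^ 2) * (exp μ * u), 0) := by
  simp only [jetAct, Prod.mk.injEq, exp_add, true_and]
  constructor
  · field_simp
    ring
  · field_simp
    ring

theorem jetAct_of_fifth_eq_div_eq_iff (e1 e2 e3 e4 : ℝ) (hu : 0 < u) (hd : 0 < u * ut - ux ^ 2) :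
    jetAct (e1, e2, e3, e4, ux / u) (t, x, u, ut, ux) = (0, 0, 1, 1, 0) ↔
      (e1, e2, e3, e4, ux / u) = movingFrame t x u ut ux := by
  rw [jetAct_of_fifth_eq_div e1 e2 e3 e4 hu.ne']
  simp only [movingFrame, Prod.mk.injEq, mul_eq_zero_iff_left (exp_ne_zero _), and_true]
  have hD := div_sub_sq_div_sq_pos hu hd
  rw [and_congr_right (a := _ * u = 1) fun h => by rw [h, mul_one, exp_mul_eq_one_iff hD],
    exp_mul_eq_one_iff hu]
  refine and_congr ?_ (and_congr ?_ (and_congr ?_ ?_))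
  all_goals constructor <;> intro h
  all_goals first
    | linear_combination h
    | linear_combination (-1/2 : ℝ) * h
    | linear_combination (-2 : ℝ) * h

theorem jetAct_eq_normal_iff (ε : ℝ × ℝ × ℝ × ℝ × ℝ) (hu : 0 < u) (hd : 0 < u * ut - ux ^ 2) :
    jetAct ε (t, x, u, ut, ux) = (0, 0, 1, 1, 0) ↔ ε = movingFrame t x u ut ux := by
  constructor
  · intro h
    obtain ⟨e1, e2, e3, e4, e5⟩ := ε
    obtain rfl : e5 = ux / u := (jetAct_fifth_eq_zero_iff _ hu.ne').1 (congrArg (·.2.2.2.2) h)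
    exact (jetAct_of_fifth_eq_div_eq_iff e1 e2 e3 e4 hu hd).1 h
  · rintro rfl
    exact (jetAct_of_fifth_eq_div_eq_iff _ _ _ _ hu hd).2 rfl

end

/-- The moving frame `ε₁ = −t`, `ε₂ = −(x+2tu_x/u)`,
`ε₃ = −(ln u − xu_x/u − tu_x²/u²)`, `ε₄ = ½ ln(u_t/u − u_x²/u²)`, `ε₅ = u_x/u`
is the unique group element mapping the jet `(t,x,u,u_t,u_x)` to the
normalized jet `(0,0,1,1,0)`, provided `u > 0` and `uu_t − u_x² > 0`. -/
theorem moving_frame_unique (t x u ut ux : ℝ) (hu : 0 < u)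
    (hd : 0 < u * ut - ux^2) :
    jetAct (-t, -(x + 2*t*ux/u), -(Real.log u - x*ux/u - t*ux^2/u^2),
        (1/2) * Real.log (ut/u - ux^2/u^2), ux/u) (t, x, u, ut, ux)
      = (0, 0, 1, 1, 0)
    ∧ ∀ ε : ℝ × ℝ × ℝ × ℝ × ℝ,
        jetAct ε (t, x, u, ut, ux) = (0, 0, 1, 1, 0) →
        ε = (-t, -(x + 2*t*ux/u), -(Real.log u - x*ux/u - t*ux^2/u^2),
          (1/2) * Real.log (ut/u - ux^2/u^2), ux/u) :=
  ⟨(jetAct_eq_normal_iff _ hu hd).2 rfl, fun ε => (jetAct_eq_normal_iff ε hu hd).1⟩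
end

section
/- On the first jet space with u > 0 and uu_t − u_x² > 0, the invariantization of u_{xx} under the moving frame ε₁=−t, ε₂=−(x+2tu_x/u), ε₃=−(ln u − xu_x/u − tu_x²/u²), ε₄=½ln(u_t/u − u_x²/u²), ε₅=u_x/u, applied to the second-order prolonged action ũ_{x̃x̃} = e^{−2ε₄+ε₃−ε₅x−ε₅²t}(u_{xx} − 2ε₅u_x + ε₅²u), equals (u u_{xx} − u_x²)/(u u_t − u_x²). -/
open Real

/-!
The translation parts `ε₅x` and `ε₅²t` of the exponent cancel against the `x` and `t` terms
of `ε₃`, so the exponential collapses to `1 / (u (u_t/u − u_x²/u²)) = u / (uu_t − u_x²)`,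
while the prolonged factor is `(uu_{xx} − u_x²)/u`.
-/

lemma div_sub_sq_div_sq_mul_self {u ut ux : ℝ} (hu : u ≠ 0) :
    (ut / u - ux ^ 2 / u ^ 2) * u = (u * ut - ux ^ 2) / u := by
  field_simp

lemma frame_exponent_eq_log {t x u ut ux : ℝ} (hu : 0 < u) (hd : 0 < u * ut - ux ^ 2) :
    -2 * ((1 / 2) * Real.log (ut / u - ux ^ 2 / u ^ 2))
        + (-(Real.log u - x * ux / u - t * ux ^ 2 / u ^ 2))
        - (ux / u) * x - (ux / u) ^ 2 * t
      = Real.log (u / (u * ut - ux ^ 2)) := by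
  have hq : 0 < ut / u - ux ^ 2 / u ^ 2 := by
    have : ut / u - ux ^ 2 / u ^ 2 = (u * ut - ux ^ 2) / u ^ 2 := by field_simp
    rw [this]; positivity
  calc -2 * ((1 / 2) * Real.log (ut / u - ux ^ 2 / u ^ 2))
        + (-(Real.log u - x * ux / u - t * ux ^ 2 / u ^ 2))
        - (ux / u) * x - (ux / u) ^ 2 * t
      = -(Real.log (ut / u - ux ^ 2 / u ^ 2) + Real.log u) := by ring
    _ = -Real.log ((u * ut - ux ^ 2) / u) := by
      rw [← Real.log_mul hq.ne' hu.ne', div_sub_sq_div_sq_mul_self hu.ne']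
    _ = Real.log (u / (u * ut - ux ^ 2)) := by rw [← Real.log_inv, inv_div]

lemma prolonged_uxx_factor_eq {u ux uxx : ℝ} (hu : u ≠ 0) :
    uxx - 2 * (ux / u) * ux + (ux / u) ^ 2 * u = (u * uxx - ux ^ 2) / u := by
  field_simp
  ring

/-- Invariantization of `u_{xx}`: substituting the moving frame
`ε₃ = −(ln u − xu_x/u − tu_x²/u²)`, `ε₄ = ½ ln(u_t/u − u_x²/u²)`, `ε₅ = u_x/u`
into the prolonged action
`ũ_{x̃x̃} = e^{−2ε₄+ε₃−ε₅x−ε₅²t}(u_{xx} − 2ε₅u_x + ε₅²u)` yields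
`(uu_{xx} − u_x²)/(uu_t − u_x²)`. -/
theorem invariantization_of_uxx (t x u ut ux uxx : ℝ) (hu : 0 < u)
    (hd : 0 < u * ut - ux^2) :
    exp (-2*((1/2) * Real.log (ut/u - ux^2/u^2))
        + (-(Real.log u - x*ux/u - t*ux^2/u^2))
        - (ux/u)*x - (ux/u)^2*t)
      * (uxx - 2*(ux/u)*ux + (ux/u)^2*u)
    = (u*uxx - ux^2) / (u*ut - ux^2) := by
  rw [frame_exponent_eq_log hu hd, Real.exp_log (div_pos hu hd),
    prolonged_uxx_factor_eq hu.ne']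
  field_simp
end

section
/- The function I(t,x,u,u_t,u_x,u_{xx}) = (u u_{xx} − u_x²)/(u u_t − u_x²), defined on the domain u > 0, uu_t − u_x² > 0, is invariant under the prolonged action of the 5-parameter group: substituting the transformed jet coordinates (t̃, x̃, ũ, ũ_{t̃}, ũ_{x̃}, ũ_{x̃x̃}) gives the same value as the original jet coordinates, for all parameter values (ε₁,…,ε₅). -/
open Real

/-!
Both numerator and denominator of `I` have the form `u w − u_x²`. The Galilean part of the
action (parameter `ε₅`) shifts `(u_x, w)` so that `u w − u_x²` is unchanged, and the scalings
multiply it by `e^{μ} e^{−2ε₄+μ} = (e^{−ε₄+μ})²`; this common positive factor cancels in `I`.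
-/

theorem mul_sub_sq_galilean_shift {R : Type*} [CommRing R] (ε u ux w : R) :
    u * (w - 2 * ε * ux + ε ^ 2 * u) - (ux - ε * u) ^ 2 = u * w - ux ^ 2 := by
  ring

theorem mul_mul_sub_sq_of_mul_eq_sq {R : Type*} [CommRing R] {a b c : R} (h : a * b = c ^ 2)
    (u v w : R) : a * u * (b * w) - (c * v) ^ 2 = c ^ 2 * (u * w - v ^ 2) := by
  linear_combination (u * w) * h

theorem exp_mul_exp_neg_two_mul_add (a b : ℝ) : exp a * exp (-2 * b + a) = exp (-b + a) ^ 2 := by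
  rw [sq, ← exp_add, ← exp_add]
  ring_nf

theorem differential_invariant_heat_general (ε₃ ε₄ ε₅ : ℝ)
    (t x u ut ux uxx : ℝ) :
    ((exp (ε₃ - ε₅*x - ε₅^2*t) * u)
        * (exp (-2*ε₄ + (ε₃ - ε₅*x - ε₅^2*t)) * (uxx - 2*ε₅*ux + ε₅^2*u))
      - (exp (-ε₄ + (ε₃ - ε₅*x - ε₅^2*t)) * (ux - ε₅*u))^2)
    / ((exp (ε₃ - ε₅*x - ε₅^2*t) * u)
        * (exp (-2*ε₄ + (ε₃ - ε₅*x - ε₅^2*t)) * (ut - 2*ε₅*ux + ε₅^2*u))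
      - (exp (-ε₄ + (ε₃ - ε₅*x - ε₅^2*t)) * (ux - ε₅*u))^2)
    = (u*uxx - ux^2) / (u*ut - ux^2) := by
  have hscale := exp_mul_exp_neg_two_mul_add (ε₃ - ε₅*x - ε₅^2*t) ε₄
  rw [mul_mul_sub_sq_of_mul_eq_sq hscale, mul_mul_sub_sq_of_mul_eq_sq hscale,
    mul_sub_sq_galilean_shift, mul_sub_sq_galilean_shift]
  exact mul_div_mul_left _ _ (by positivity)

/-- The function `I = (uu_{xx} − u_x²)/(uu_t − u_x²)` is invariant under the
prolonged action of the 5-parameter group on second-order jets: substituting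
the transformed jet coordinates gives the same value, for all parameters. -/
theorem differential_invariant_heat (ε₁ ε₂ ε₃ ε₄ ε₅ : ℝ)
    (t x u ut ux uxx : ℝ) (hu : 0 < u) (hd : 0 < u * ut - ux^2) :
    ((exp (ε₃ - ε₅*x - ε₅^2*t) * u)
        * (exp (-2*ε₄ + (ε₃ - ε₅*x - ε₅^2*t)) * (uxx - 2*ε₅*ux + ε₅^2*u))
      - (exp (-ε₄ + (ε₃ - ε₅*x - ε₅^2*t)) * (ux - ε₅*u))^2)
    / ((exp (ε₃ - ε₅*x - ε₅^2*t) * u)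
        * (exp (-2*ε₄ + (ε₃ - ε₅*x - ε₅^2*t)) * (ut - 2*ε₅*ux + ε₅^2*u))
      - (exp (-ε₄ + (ε₃ - ε₅*x - ε₅^2*t)) * (ux - ε₅*u))^2)
    = (u*uxx - ux^2) / (u*ut - ux^2) :=
  differential_invariant_heat_general ε₃ ε₄ ε₅ t x u ut ux uxx
end

section
/- Let u: ℝ → ℝ be C⁴ and positive. With h⁺ = h⁻ = h, ε₅ = (ln u(x+h) − ln u(x−h))/(2h), the invariantized second-difference D(h) = (1/h²)[e^{−ε₅h}u(x+h) + e^{ε₅h}u(x−h) − 2u(x)] satisfies D(h) = u''(x) − u'(x)²/u(x) + O(h²) as h → 0. -/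
/-! The exponential weights turn both `u(x ± h)` into the geometric mean
`G(h) = √(u(x+h) u(x−h))`, so `D(h) = 2 (G(h) − G(0)) / h²`. Since `G` is even, its odd Taylor
coefficients at `0` vanish and Taylor's theorem of order four gives `D(h) = G''(0) + O(h²)`;
differentiating `G² = u(x+t) u(x−t)` twice at `0` gives `G''(0) = u''(x) − u'(x)²/u(x)`. -/

open Real Set

theorem Function.Even.iteratedDeriv_zero_eq_zero {F : Type*} [NormedAddCommGroup F]
    [NormedSpace ℝ F] {f : ℝ → F} (hf : Function.Even f) {n : ℕ} (hn : Odd n) :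
    iteratedDeriv n f 0 = 0 := by
  have h := iteratedDeriv_comp_neg n f 0
  rw [show (fun t ↦ f (-t)) = f from funext hf, neg_zero, hn.neg_one_pow, neg_one_smul] at h
  have h2 : (2 : ℝ) • iteratedDeriv n f 0 = 0 := by rw [two_smul]; exact eq_neg_iff_add_eq_zero.mp h
  exact (smul_eq_zero.mp h2).resolve_left two_ne_zero

theorem Function.Even.taylor_mean_remainder_lagrange_four {f : ℝ → ℝ} (hf : Function.Even f)
    (hf4 : ContDiff ℝ 4 f) {h : ℝ} (hh : 0 < h) :
    ∃ ξ ∈ Ioo 0 h,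
      f h = f 0 + iteratedDeriv 2 f 0 / 2 * h ^ 2 + iteratedDeriv 4 f ξ / 24 * h ^ 4 := by
  obtain ⟨ξ, hξ, hT⟩ := taylor_mean_remainder_lagrange_iteratedDeriv (n := 3) hh.ne hf4.contDiffOn
  rw [uIoo_of_le hh.le] at hξ
  refine ⟨ξ, hξ, ?_⟩
  have hderiv (k : ℕ) (hk : k ≤ 4) :
      iteratedDerivWithin k f (uIcc 0 h) 0 = iteratedDeriv k f 0 := by
    rw [uIcc_of_le hh.le]
    exact iteratedDerivWithin_eq_iteratedDeriv (uniqueDiffOn_Icc hh)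
      (hf4.contDiffAt.of_le (by exact_mod_cast hk)) (left_mem_Icc.mpr hh.le)
  simp only [taylor_within_apply, Finset.sum_range_succ, Finset.sum_range_zero] at hT
  rw [hderiv 0 (by norm_num), hderiv 1 (by norm_num), hderiv 2 (by norm_num),
    hderiv 3 (by norm_num), hf.iteratedDeriv_zero_eq_zero odd_one,
    hf.iteratedDeriv_zero_eq_zero (by decide : Odd 3)] at hT
  norm_num [Nat.factorial] at hT
  linarith

theorem Function.Even.iteratedDeriv_two_mul_self_zero {g : ℝ → ℝ} (hg : Function.Even g)
    (hg2 : ContDiff ℝ 2 g) :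
    iteratedDeriv 2 (fun t ↦ g t * g t) 0 = 2 * g 0 * iteratedDeriv 2 g 0 := by
  rw [iteratedDeriv_fun_mul hg2.contDiffAt hg2.contDiffAt]
  simp [Finset.sum_range_succ, hg.iteratedDeriv_zero_eq_zero odd_one]
  ring

theorem iteratedDeriv_two_add_mul_sub_zero {u : ℝ → ℝ} (hu : ContDiff ℝ 2 u) (x : ℝ) :
    iteratedDeriv 2 (fun t ↦ u (x + t) * u (x - t)) 0 =
      2 * (u x * iteratedDeriv 2 u x - deriv u x ^ 2) := by
  have hplus : ContDiff ℝ 2 fun t ↦ u (x + t) := hu.comp (contDiff_const.add contDiff_id)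
  have hminus : ContDiff ℝ 2 fun t ↦ u (x - t) := hu.comp (contDiff_const.sub contDiff_id)
  rw [iteratedDeriv_fun_mul hplus.contDiffAt hminus.contDiffAt]
  simp [Finset.sum_range_succ, iteratedDeriv_comp_const_add, iteratedDeriv_comp_const_sub]
  ring

noncomputable def symmGeomMean (u : ℝ → ℝ) (x t : ℝ) : ℝ :=
  √(u (x + t) * u (x - t))

theorem symmGeomMean_even (u : ℝ → ℝ) (x : ℝ) : Function.Even (symmGeomMean u x) := by
  intro t
  simp only [symmGeomMean, sub_neg_eq_add, ← sub_eq_add_neg, mul_comm]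

theorem symmGeomMean_zero {u : ℝ → ℝ} (hpos : ∀ y, 0 < u y) (x : ℝ) :
    symmGeomMean u x 0 = u x := by
  simp [symmGeomMean, Real.sqrt_mul_self (hpos x).le]

theorem symmGeomMean_mul_self {u : ℝ → ℝ} (hpos : ∀ y, 0 < u y) (x t : ℝ) :
    symmGeomMean u x t * symmGeomMean u x t = u (x + t) * u (x - t) :=
  Real.mul_self_sqrt (mul_pos (hpos _) (hpos _)).le

theorem contDiff_symmGeomMean {n : WithTop ℕ∞} {u : ℝ → ℝ} (hu : ContDiff ℝ n u)
    (hpos : ∀ y, 0 < u y) (x : ℝ) : ContDiff ℝ n (symmGeomMean u x) :=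
  ((hu.comp (contDiff_const.add contDiff_id)).mul (hu.comp (contDiff_const.sub contDiff_id))).sqrt
    fun _ ↦ (mul_pos (hpos _) (hpos _)).ne'

theorem iteratedDeriv_two_symmGeomMean_zero {u : ℝ → ℝ} (hu : ContDiff ℝ 2 u)
    (hpos : ∀ y, 0 < u y) (x : ℝ) :
    iteratedDeriv 2 (symmGeomMean u x) 0 = deriv (deriv u) x - deriv u x ^ 2 / u x := by
  have h :=
    (symmGeomMean_even u x).iteratedDeriv_two_mul_self_zero (contDiff_symmGeomMean hu hpos x)
  rw [funext (symmGeomMean_mul_self hpos x), iteratedDeriv_two_add_mul_sub_zero hu,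
    symmGeomMean_zero hpos, iteratedDeriv_succ, iteratedDeriv_one] at h
  have hux := (hpos x).ne'
  field_simp
  linarith

theorem exp_neg_log_sub_log_div_two_mul_add {a b : ℝ} (ha : 0 < a) (hb : 0 < b) :
    exp (-((log a - log b) / 2)) * a + exp ((log a - log b) / 2) * b = 2 * √(a * b) := by
  obtain ⟨p, rfl⟩ : ∃ p, a = exp p := ⟨log a, (exp_log ha).symm⟩
  obtain ⟨q, rfl⟩ : ∃ q, b = exp q := ⟨log b, (exp_log hb).symm⟩
  rw [log_exp, log_exp, ← exp_add, ← exp_add, ← exp_add, ← exp_half]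
  ring_nf

/-- Second-order accuracy of the invariantized second difference: if `u` is
`C⁴` and positive, and `ε₅(h) = (ln u(x+h) − ln u(x−h))/(2h)`, then
`D(h) = (1/h²)[e^{−ε₅h}u(x+h) + e^{ε₅h}u(x−h) − 2u(x)]`
satisfies `D(h) = u''(x) − u'(x)²/u(x) + O(h²)` as `h → 0`. -/
theorem invariantized_second_difference_second_order (u : ℝ → ℝ)
    (hu : ContDiff ℝ 4 u) (hpos : ∀ y, 0 < u y) (x : ℝ) :
    ∃ C h₀ : ℝ, 0 < C ∧ 0 < h₀ ∧ ∀ h : ℝ, 0 < h → h < h₀ →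
      |(1/h^2) * (exp (-((Real.log (u (x + h)) - Real.log (u (x - h))) / (2*h)) * h)
            * u (x + h)
          + exp (((Real.log (u (x + h)) - Real.log (u (x - h))) / (2*h)) * h)
            * u (x - h)
          - 2 * u x)
        - (deriv (deriv u) x - (deriv u x)^2 / u x)| ≤ C * h^2 := by
  set G := symmGeomMean u x
  have hG : ContDiff ℝ 4 G := contDiff_symmGeomMean hu hpos x
  obtain ⟨M, hM⟩ := (isCompact_Icc (a := (0 : ℝ)) (b := 1)).exists_bound_of_continuousOn
    (hG.continuous_iteratedDeriv 4 le_rfl).continuousOn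
  refine ⟨|M| / 12 + 1, 1, by positivity, one_pos, fun h hh hh1 ↦ ?_⟩
  obtain ⟨ξ, hξ, hTaylor⟩ :=
    (show Function.Even G from symmGeomMean_even u x).taylor_mean_remainder_lagrange_four hG hh
  have hξM : |iteratedDeriv 4 G ξ| ≤ |M| :=
    (hM ξ ⟨hξ.1.le, hξ.2.le.trans hh1.le⟩).trans (le_abs_self M)
  have hhalf : (log (u (x + h)) - log (u (x - h))) / (2 * h) * h =
      (log (u (x + h)) - log (u (x - h))) / 2 := by
    field_simp
  rw [neg_mul, hhalf, exp_neg_log_sub_log_div_two_mul_add (hpos _) (hpos _),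
    ← iteratedDeriv_two_symmGeomMean_zero (hu.of_le (by norm_num)) hpos x,
    ← symmGeomMean_zero hpos x]
  change |1 / h ^ 2 * (2 * G h - 2 * G 0) - iteratedDeriv 2 G 0| ≤ _
  calc _ = |iteratedDeriv 4 G ξ / 12 * h ^ 2| := by
        congr 1
        rw [hTaylor]
        field_simp
        ring
    _ = |iteratedDeriv 4 G ξ| / 12 * h ^ 2 := by simp [abs_mul, abs_div]
    _ ≤ (|M| / 12 + 1) * h ^ 2 := by gcongr; linarith
end
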